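/- Fix k ∈ {1, …, n}. The dual cone of the sum-of-largest-eigenvalues cone K_mSum = {(t, X) ∈ ℝ × Sⁿ : ∑_{i=1}^k λ_i(X) ≤ t}, with respect to the inner product ⟨(t,X),(s,Y)⟩ = t s + Tr(XY), equals {(t, X) ∈ ℝ × Sⁿ : −t ≤ λ_i(X) ≤ 0 for i = 1, …, n, and ∑_{i=1}^n λ_i(X) = −t k}. -/

import Mathlib

open Matrix Finset

/-- The entries of `x` sorted in nonincreasing order. -/
noncomputable def sortDesc {n : ℕ} (x : Fin n → ℝ) : Fin n → ℝ :=
  fun i => (x ∘ Tuple.sort x) i.rev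

open Classical in
/-- The eigenvalues of a real symmetric matrix in nonincreasing order,
so `eigsDesc X i = λ_{i+1}(X)` (`λ₁(X) ≥ … ≥ λ_n(X)` in one-based notation);
junk value `0` if the matrix is not symmetric. -/
noncomputable def eigsDesc {n : ℕ} (X : Matrix (Fin n) (Fin n) ℝ) : Fin n → ℝ :=
  if h : X.IsHermitian then sortDesc h.eigenvalues else 0

/-!
Write `f_k(X) = λ₁(X) + ⋯ + λ_k(X)`. Testing the dual inequality `t s + Tr(XY) ≥ 0` against
`(|v|², v vᵀ)`, `(0, -v vᵀ)` and `(±k, ±I)` forces `-t |v|² ≤ vᵀ Y v ≤ 0` and `Tr Y = -t k`.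
Conversely, in an orthonormal eigenbasis `(u_j)` of `X` one has `Tr(XY) = ∑ λ_j(X) c_j` with
`c_j = u_jᵀ Y u_j ∈ [-t, 0]` and `∑ c_j = -t k`. Weights `-c_j ∈ [0, t]` of total mass `t k` give
`∑ λ_j(X) (-c_j) ≤ t f_k(X)`, since the mass is best spent on the `k` largest eigenvalues; hence
`t s + Tr(XY) ≥ t (s - f_k(X)) ≥ 0` (and `t ≥ 0` because `-t ≤ λ_1(Y) ≤ 0`).
-/

open scoped ComplexOrder

namespace Matrix.IsHermitian

variable {𝕜 ι : Type*} [RCLike 𝕜] [Fintype ι] [DecidableEq ι]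

lemma posSemidef_smul_add_smul_one_iff {A : Matrix ι ι 𝕜} (hA : A.IsHermitian) (α β : ℝ) :
    ((α : 𝕜) • A + (β : 𝕜) • 1).PosSemidef ↔ ∀ i, 0 ≤ α * hA.eigenvalues i + β := by
  conv_lhs => rw [hA.spectral_theorem,
    ← map_one (Unitary.conjStarAlgAut 𝕜 _ hA.eigenvectorUnitary), ← map_smul, ← map_smul,
    ← map_add, Unitary.conjStarAlgAut_apply,
    Unitary.isUnit_coe.posSemidef_star_right_conjugate_iff, smul_one_eq_diagonal,
    ← diagonal_smul, diagonal_add, posSemidef_diagonal_iff]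
  refine forall_congr' fun i => ?_
  rw [Pi.smul_apply, Function.comp_apply, smul_eq_mul, ← RCLike.ofReal_mul, ← RCLike.ofReal_add,
    RCLike.ofReal_nonneg]

variable {A : Matrix ι ι ℝ}

lemma forall_dotProduct_mulVec_nonneg_iff (hA : A.IsHermitian) (α β : ℝ) :
    (∀ v, 0 ≤ α * (v ⬝ᵥ A *ᵥ v) + β * (v ⬝ᵥ v)) ↔ ∀ i, 0 ≤ α * hA.eigenvalues i + β := by
  have hB : (α • A + β • 1).IsHermitian := (hA.smul (.all α)).add (isHermitian_one.smul (.all β))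
  rw [← hA.posSemidef_smul_add_smul_one_iff, posSemidef_iff_dotProduct_mulVec]
  simp only [RCLike.ofReal_real_eq_id, id, hB, true_and, add_mulVec, smul_mulVec, one_mulVec,
    dotProduct_add, dotProduct_smul, star_trivial, smul_eq_mul]

lemma eigenvalues_le_iff (hA : A.IsHermitian) (b : ℝ) :
    (∀ i, hA.eigenvalues i ≤ b) ↔ ∀ v, v ⬝ᵥ A *ᵥ v ≤ b * (v ⬝ᵥ v) := by
  have h := hA.forall_dotProduct_mulVec_nonneg_iff (-1) b
  simp only [neg_one_mul, neg_add_eq_sub, sub_nonneg] at h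
  exact h.symm

lemma le_eigenvalues_iff (hA : A.IsHermitian) (a : ℝ) :
    (∀ i, a ≤ hA.eigenvalues i) ↔ ∀ v, a * (v ⬝ᵥ v) ≤ v ⬝ᵥ A *ᵥ v := by
  have h := hA.forall_dotProduct_mulVec_nonneg_iff 1 (-a)
  simp only [one_mul, neg_mul, ← sub_eq_add_neg, sub_nonneg] at h
  exact h.symm

variable {X : Matrix ι ι ℝ}

lemma star_eigenvectorUnitary_mul_mul_apply (hX : X.IsHermitian) (Y : Matrix ι ι ℝ) (j : ι) :
    (star (hX.eigenvectorUnitary : Matrix ι ι ℝ) * Y * hX.eigenvectorUnitary) j j =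
      ⇑(hX.eigenvectorBasis j) ⬝ᵥ Y *ᵥ ⇑(hX.eigenvectorBasis j) := by
  rw [mul_mul_apply, star_eq_conjTranspose, conjTranspose_eq_transpose_of_trivial,
    eigenvectorUnitary_transpose_apply]

lemma dotProduct_eigenvectorBasis_self (hX : X.IsHermitian) (j : ι) :
    ⇑(hX.eigenvectorBasis j) ⬝ᵥ ⇑(hX.eigenvectorBasis j) = 1 := by
  simpa [Unitary.coe_star_mul_self] using (hX.star_eigenvectorUnitary_mul_mul_apply 1 j).symm

lemma sum_dotProduct_eigenvectorBasis (hX : X.IsHermitian) (Y : Matrix ι ι ℝ) :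
    ∑ j, ⇑(hX.eigenvectorBasis j) ⬝ᵥ Y *ᵥ ⇑(hX.eigenvectorBasis j) = Y.trace := by
  set U : Matrix ι ι ℝ := (hX.eigenvectorUnitary : Matrix ι ι ℝ)
  calc ∑ j, ⇑(hX.eigenvectorBasis j) ⬝ᵥ Y *ᵥ ⇑(hX.eigenvectorBasis j)
      = (star U * Y * U).trace := by simp_rw [← hX.star_eigenvectorUnitary_mul_mul_apply]; rfl
    _ = Y.trace := by
      rw [trace_mul_cycle, mem_unitaryGroup_iff.mp hX.eigenvectorUnitary.2, one_mul]

lemma trace_mul_eq_sum (hX : X.IsHermitian) (Y : Matrix ι ι ℝ) :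
    (X * Y).trace =
      ∑ j, hX.eigenvalues j * (⇑(hX.eigenvectorBasis j) ⬝ᵥ Y *ᵥ ⇑(hX.eigenvectorBasis j)) := by
  simp_rw [← hX.star_eigenvectorUnitary_mul_mul_apply]
  conv_lhs => rw [hX.spectral_theorem, Unitary.conjStarAlgAut_apply]
  rw [mul_assoc, mul_assoc, trace_mul_comm, mul_assoc]
  simp [trace, diagonal_mul]

end Matrix.IsHermitian

section SumFirst

variable {n k : ℕ}

lemma exists_perm_sortDesc_eq (x : Fin n → ℝ) : ∃ σ : Equiv.Perm (Fin n), sortDesc x = x ∘ σ :=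
  ⟨Fin.revPerm.trans (Tuple.sort x), rfl⟩

lemma antitone_sortDesc (x : Fin n → ℝ) : Antitone (sortDesc x) :=
  fun _ _ hij => Tuple.monotone_sort x (Fin.rev_le_rev.mpr hij)

lemma sum_sortDesc (x : Fin n → ℝ) : ∑ i, sortDesc x i = ∑ i, x i := by
  obtain ⟨σ, hσ⟩ := exists_perm_sortDesc_eq x
  rw [hσ]
  exact Equiv.sum_comp σ x

lemma forall_sortDesc_iff (x : Fin n → ℝ) (p : ℝ → Prop) :
    (∀ i, p (sortDesc x i)) ↔ ∀ i, p (x i) := by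
  obtain ⟨σ, hσ⟩ := exists_perm_sortDesc_eq x
  rw [hσ]
  exact ⟨fun h i => by simpa using h (σ.symm i), fun h i => h (σ i)⟩

def sumFirst (k : ℕ) (x : Fin n → ℝ) : ℝ :=
  ∑ i : Fin n, if (i : ℕ) < k then x i else 0

lemma sumFirst_const (hkn : k ≤ n) (c : ℝ) : sumFirst k (fun _ : Fin n => c) = k * c := by
  rw [sumFirst, ← sum_filter, sum_const, nsmul_eq_mul, Fin.card_filter_val_lt, min_eq_right hkn]

lemma sumFirst_mono {x y : Fin n → ℝ} (h : x ≤ y) : sumFirst k x ≤ sumFirst k y :=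
  sum_le_sum fun i _ => by split_ifs; exacts [h i, le_rfl]

lemma sumFirst_le_sum {x : Fin n → ℝ} (h : 0 ≤ x) : sumFirst k x ≤ ∑ i, x i :=
  sum_le_sum fun i _ => by split_ifs; exacts [le_rfl, h i]

lemma sum_mul_le_mul_sumFirst (hk : 0 < k) (hkn : k ≤ n) {x d : Fin n → ℝ} {t : ℝ}
    (hx : Antitone x) (hd0 : 0 ≤ d) (hdt : ∀ i, d i ≤ t) (hd : ∑ i, d i = k * t) :
    ∑ i, x i * d i ≤ t * sumFirst k x := by
  -- Each term is bounded by `m * (d i - t * [i < k])` for the threshold `m = x (k - 1)`,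
  -- and these bounds sum to `m * (k t - k t) = 0`.
  set m := x ⟨k - 1, by omega⟩
  have hterm : ∀ i : Fin n, x i * d i - t * (if (i : ℕ) < k then x i else 0) ≤
      m * (d i - if (i : ℕ) < k then t else 0) := by
    intro i
    split_ifs with hik
    · have : m ≤ x i := hx (Fin.mk_le_mk.mpr (by omega))
      nlinarith [hdt i]
    · have : x i ≤ m := hx (Fin.mk_le_mk.mpr (by omega))
      simpa using mul_le_mul_of_nonneg_right this (hd0 i)
  have hsum := sum_le_sum fun i (_ : i ∈ univ) => hterm i
  rw [sum_sub_distrib, ← mul_sum, ← mul_sum, sum_sub_distrib, hd] at hsum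
  change _ - t * sumFirst k x ≤ m * (_ - sumFirst k fun _ => t) at hsum
  rwa [sumFirst_const hkn, sub_self, mul_zero, sub_nonpos] at hsum

lemma sum_mul_le_mul_sumFirst_sortDesc (hk : 0 < k) (hkn : k ≤ n) (x : Fin n → ℝ)
    {d : Fin n → ℝ} {t : ℝ} (hd0 : 0 ≤ d) (hdt : ∀ i, d i ≤ t) (hd : ∑ i, d i = k * t) :
    ∑ i, x i * d i ≤ t * sumFirst k (sortDesc x) := by
  obtain ⟨σ, hσ⟩ := exists_perm_sortDesc_eq x
  rw [← Equiv.sum_comp σ]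
  refine sum_mul_le_mul_sumFirst hk hkn (antitone_sortDesc x) (fun i => hd0 (σ i))
    (fun i => hdt (σ i)) (by rw [Equiv.sum_comp σ d, hd]) |>.trans_eq' ?_
  simp [hσ]

end SumFirst

lemma Matrix.trace_vecMulVec_self_mul {α ι : Type*} [CommSemiring α] [Fintype ι] (v : ι → α)
    (Y : Matrix ι ι α) : (vecMulVec v v * Y).trace = v ⬝ᵥ Y *ᵥ v := by
  rw [vecMulVec_mul, trace_vecMulVec, dotProduct_comm, dotProduct_mulVec]

namespace Matrix.IsHermitian

variable {n k : ℕ} {X Y : Matrix (Fin n) (Fin n) ℝ}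

lemma eigsDesc_eq (hX : X.IsHermitian) : eigsDesc X = sortDesc hX.eigenvalues := by
  rw [eigsDesc, dif_pos hX]

lemma sum_eigsDesc (hX : X.IsHermitian) : ∑ i, eigsDesc X i = X.trace := by
  simp [hX.eigsDesc_eq, sum_sortDesc, hX.trace_eq_sum_eigenvalues]

lemma sumFirst_eigsDesc_le_mul (hX : X.IsHermitian) (hkn : k ≤ n) {b : ℝ}
    (h : ∀ i, hX.eigenvalues i ≤ b) : sumFirst k (eigsDesc X) ≤ k * b := by
  rw [← sumFirst_const hkn, hX.eigsDesc_eq]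
  exact sumFirst_mono ((forall_sortDesc_iff _ (· ≤ b)).mpr h)

lemma _root_.Matrix.PosSemidef.sumFirst_eigsDesc_le_trace (hX : X.PosSemidef) :
    sumFirst k (eigsDesc X) ≤ X.trace := by
  rw [← hX.isHermitian.sum_eigsDesc, hX.isHermitian.eigsDesc_eq]
  exact sumFirst_le_sum ((forall_sortDesc_iff _ (0 ≤ ·)).mpr hX.eigenvalues_nonneg)

lemma eigenvalues_mem_Icc_and_trace_eq_of_dual (hY : Y.IsHermitian) (hkn : k ≤ n) {t : ℝ}
    (hdual : ∀ s (X : Matrix (Fin n) (Fin n) ℝ), X.IsHermitian →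
      sumFirst k (eigsDesc X) ≤ s → 0 ≤ t * s + (X * Y).trace) :
    (∀ i, -t ≤ hY.eigenvalues i ∧ hY.eigenvalues i ≤ 0) ∧ Y.trace = -t * k := by
  have hrankOne (v : Fin n → ℝ) :
      v ⬝ᵥ Y *ᵥ v ≤ 0 ∧ -t * (v ⬝ᵥ v) ≤ v ⬝ᵥ Y *ᵥ v := by
    have hP : (vecMulVec v v).PosSemidef := by simpa using posSemidef_vecMulVec_self_star v
    have hneg : (-vecMulVec v v).IsHermitian := hP.isHermitian.neg
    have hneg_le : ∀ i, hneg.eigenvalues i ≤ 0 := (hneg.eigenvalues_le_iff 0).mpr fun w => by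
      simpa [neg_mulVec] using hP.dotProduct_mulVec_nonneg w
    have h₁ := hdual 0 _ hneg (by simpa using hneg.sumFirst_eigsDesc_le_mul hkn hneg_le)
    have h₂ := hdual _ _ hP.isHermitian hP.sumFirst_eigsDesc_le_trace
    rw [Matrix.neg_mul, trace_neg, trace_vecMulVec_self_mul] at h₁
    rw [trace_vecMulVec, trace_vecMulVec_self_mul] at h₂
    constructor <;> linarith
  have hscalar (c : ℝ) : 0 ≤ t * (k * c) + c * Y.trace := by
    have hc : (c • 1 : Matrix (Fin n) (Fin n) ℝ).IsHermitian := isHermitian_one.smul (.all c)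
    have hc_le : ∀ i, hc.eigenvalues i ≤ c := (hc.eigenvalues_le_iff c).mpr fun w => by
      simp [smul_mulVec]
    simpa using hdual _ _ hc (hc.sumFirst_eigsDesc_le_mul hkn hc_le)
  refine ⟨fun i => ⟨?_, ?_⟩, ?_⟩
  · exact (hY.le_eigenvalues_iff (-t)).mpr (fun v => (hrankOne v).2) i
  · exact (hY.eigenvalues_le_iff 0).mpr (fun v => by simpa using (hrankOne v).1) i
  · linarith [hscalar 1, hscalar (-1)]

lemma neg_mul_sumFirst_le_trace_mul (hX : X.IsHermitian) (hY : Y.IsHermitian) (hk : 0 < k)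
    (hkn : k ≤ n) {t : ℝ} (hbd : ∀ i, -t ≤ hY.eigenvalues i ∧ hY.eigenvalues i ≤ 0)
    (htr : Y.trace = -t * k) :
    -(t * sumFirst k (eigsDesc X)) ≤ (X * Y).trace := by
  rw [hX.trace_mul_eq_sum, hX.eigsDesc_eq]
  set c : Fin n → ℝ := fun j => ⇑(hX.eigenvectorBasis j) ⬝ᵥ Y *ᵥ ⇑(hX.eigenvectorBasis j)
  have hc_le (j) : c j ≤ 0 := by
    simpa [hX.dotProduct_eigenvectorBasis_self] using
      (hY.eigenvalues_le_iff 0).mp (fun i => (hbd i).2) (hX.eigenvectorBasis j)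
  have hc_ge (j) : -t ≤ c j := by
    simpa [hX.dotProduct_eigenvectorBasis_self] using
      (hY.le_eigenvalues_iff (-t)).mp (fun i => (hbd i).1) (hX.eigenvectorBasis j)
  have hsum : ∑ j, -c j = k * t := by
    rw [sum_neg_distrib, hX.sum_dotProduct_eigenvectorBasis, htr]
    ring
  have key := sum_mul_le_mul_sumFirst_sortDesc hk hkn hX.eigenvalues
    (fun j => neg_nonneg.mpr (hc_le j)) (fun j => by linarith [hc_ge j]) hsum
  simp only [mul_neg, sum_neg_distrib] at key
  linarith

end Matrix.IsHermitian

/-- For `1 ≤ k ≤ n`, the dual cone of the sum-of-largest-eigenvalues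
cone `K_mSum = {(t, X) ∈ ℝ × Sⁿ : ∑_{i=1}^k λ_i(X) ≤ t}` with respect to the inner
product `⟨(t,X),(s,Y)⟩ = t·s + Tr(XY)` equals
`{(t, X) ∈ ℝ × Sⁿ : −t ≤ λ_i(X) ≤ 0 for all i, ∑_{i=1}^n λ_i(X) = −t·k}`.
Here `Sⁿ` is represented as the subtype of symmetric (Hermitian) real matrices. -/
theorem stmt10 {n : ℕ} (k : ℕ) (hk1 : 1 ≤ k) (hkn : k ≤ n) :
    {y : ℝ × {A : Matrix (Fin n) (Fin n) ℝ // A.IsHermitian} |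
        ∀ z ∈ {z : ℝ × {A : Matrix (Fin n) (Fin n) ℝ // A.IsHermitian} |
            (∑ i : Fin n, if (i : ℕ) < k then eigsDesc z.2.1 i else 0) ≤ z.1},
          y.1 * z.1 + (z.2.1 * y.2.1).trace ≥ 0} =
    {y : ℝ × {A : Matrix (Fin n) (Fin n) ℝ // A.IsHermitian} |
        (∀ i, -y.1 ≤ eigsDesc y.2.1 i ∧ eigsDesc y.2.1 i ≤ 0) ∧
        ∑ i, eigsDesc y.2.1 i = -y.1 * k} := by
  ext ⟨t, Y, hY⟩
  simp only [Set.mem_ofPred_eq, Prod.forall, Subtype.forall, ge_iff_le]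
  rw [hY.sum_eigsDesc, hY.eigsDesc_eq, forall_sortDesc_iff _ fun e => -t ≤ e ∧ e ≤ 0]
  constructor
  · exact hY.eigenvalues_mem_Icc_and_trace_eq_of_dual hkn
  · rintro ⟨hbd, htr⟩ s X hX (hs : sumFirst k (eigsDesc X) ≤ s)
    have ht : 0 ≤ t := by linarith [hbd ⟨0, by omega⟩]
    linarith [hX.neg_mul_sumFirst_le_trace_mul hY hk1 hkn hbd htr, mul_le_mul_of_nonneg_left hs ht]
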